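/- arXiv:2210.13520 — 2 statements merged into one kernel-verified Lean document; each statement's English description precedes it below -/
import Mathlib

section
/- Let a be a real number and z a nonzero real number. Define c : ℕ → ℝ by c(0) = −1 and c(d+1) = (1/z)·c(d) − ∑_{j=0}^{d} (a·C(d,j) + C(d,j−1))·c(j), where C(d,−1) = 0. Then for every d ≥ 0, c(d) equals the negative of the d-th iterated derivative at 0 of the function g_{a,z}(x) = exp(1/z − a·x − (1/z)·e^{−x}). -/
/-! Since `g' = g · (b e^{-x} - a)` with `b = 1/z`, the function `g` satisfies
`g' · e^x = b g - a g e^x`. Differentiating this `d` times at `0` by Leibniz' rule (all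
derivatives of `exp` are `1` at `0`) and splitting `∑ C(d,j) g^{(j+1)}(0)` by Pascal's rule gives
exactly the recurrence of `c` for the numbers `g^{(d)}(0)`. The recurrence is linear and
`g(0) = 1`, so `c = -g^{(·)}(0)`. -/

open Real Finset

theorem iteratedDeriv_mul_exp {f : ℝ → ℝ} {n : ℕ} {x : ℝ} (hf : ContDiffAt ℝ n f x) :
    iteratedDeriv n (fun y => f y * exp y) x =
      (∑ i ∈ range (n + 1), n.choose i * iteratedDeriv i f x) * exp x := by
  rw [iteratedDeriv_fun_mul hf (contDiff_exp.contDiffAt), sum_mul]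
  simp [iteratedDeriv_eq_iterate, iter_deriv_exp]

theorem sum_range_choose_mul_succ {R : Type*} [Semiring R] (d : ℕ) (u : ℕ → R) :
    ∑ i ∈ range (d + 1), (d.choose i : R) * u (i + 1) =
      u (d + 1) + ∑ j ∈ range (d + 1), (if j = 0 then 0 else (d.choose (j - 1) : R)) * u j := by
  rw [sum_range_succ, sum_range_succ']
  simp [add_comm]

noncomputable def gFun (a b x : ℝ) : ℝ := exp (b - a * x - b * exp (-x))

theorem hasDerivAt_gFun (a b x : ℝ) :
    HasDerivAt (gFun a b) (gFun a b x * (b * exp (-x) - a)) x := by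
  have h : HasDerivAt (fun y => b - a * y - b * exp (-y)) (b * exp (-x) - a) x :=
    ((((hasDerivAt_id' x).const_mul a).const_sub b).fun_sub
      ((hasDerivAt_neg' x).exp.const_mul b)).congr_deriv (by ring)
  exact h.exp

theorem deriv_gFun_mul_exp (a b x : ℝ) :
    deriv (gFun a b) x * exp x = b * gFun a b x - a * (gFun a b x * exp x) := by
  rw [(hasDerivAt_gFun a b x).deriv, mul_assoc, sub_mul, mul_assoc b, ← exp_add]
  simp only [neg_add_cancel, exp_zero, mul_one]
  ring

theorem gFun_zero (a b : ℝ) : gFun a b 0 = 1 := by simp [gFun]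

theorem contDiff_gFun (a b : ℝ) {n : WithTop ℕ∞} : ContDiff ℝ n (gFun a b) := by
  unfold gFun; fun_prop

theorem iteratedDeriv_succ_gFun_zero (a b : ℝ) (d : ℕ) :
    iteratedDeriv (d + 1) (gFun a b) 0 = b * iteratedDeriv d (gFun a b) 0 -
      ∑ j ∈ range (d + 1), (a * (d.choose j : ℝ) + if j = 0 then 0 else (d.choose (j - 1) : ℝ)) *
        iteratedDeriv j (gFun a b) 0 := by
  have hg : ContDiff ℝ d (gFun a b) := contDiff_gFun a b
  have hd := congrArg (iteratedDeriv d · 0) (funext (deriv_gFun_mul_exp a b))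
  rw [iteratedDeriv_mul_exp (contDiff_gFun a b).deriv'.contDiffAt,
    iteratedDeriv_fun_sub (contDiff_const.mul hg).contDiffAt
      (contDiff_const.mul (hg.mul contDiff_exp)).contDiffAt,
    iteratedDeriv_const_mul_field, iteratedDeriv_const_mul_field,
    iteratedDeriv_mul_exp hg.contDiffAt] at hd
  simp only [← iteratedDeriv_succ', exp_zero, mul_one] at hd
  rw [sum_range_choose_mul_succ d (iteratedDeriv · (gFun a b) 0)] at hd
  simp only [add_mul, sum_add_distrib, mul_assoc, ← mul_sum]
  linarith

theorem eq_of_forall_succ_eq_sub_sum {R : Type*} [Ring R] {u v : ℕ → R} (b : R) (w : ℕ → ℕ → R)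
    (h0 : u 0 = v 0) (hu : ∀ d, u (d + 1) = b * u d - ∑ j ∈ range (d + 1), w d j * u j)
    (hv : ∀ d, v (d + 1) = b * v d - ∑ j ∈ range (d + 1), w d j * v j) : u = v := by
  funext d
  induction d using Nat.strong_induction_on with
  | _ d ih =>
    cases d with
    | zero => exact h0
    | succ d =>
      rw [hu, hv, ih d d.lt_succ_self]
      congr 1
      exact sum_congr rfl fun j hj => by rw [ih j (mem_range.mp hj)]

theorem stmt_10_general (a z : ℝ) (c : ℕ → ℝ) (h0 : c 0 = -1)
    (hrec : ∀ d : ℕ, c (d + 1) =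
      (1 / z) * c d - ∑ j ∈ Finset.range (d + 1),
        (a * (Nat.choose d j : ℝ) + if j = 0 then 0 else (Nat.choose d (j - 1) : ℝ)) * c j) :
    ∀ d : ℕ, c d =
      -(iteratedDeriv d (fun x : ℝ => Real.exp (1 / z - a * x - (1 / z) * Real.exp (-x))) 0) := by
  change ∀ d, c d = -iteratedDeriv d (gFun a (1 / z)) 0
  refine congrFun (eq_of_forall_succ_eq_sub_sum (1 / z) _ ?_ hrec fun d => ?_)
  · simp [h0, gFun_zero]
  · simp only [iteratedDeriv_succ_gFun_zero, mul_neg, sum_neg_distrib]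
    ring

theorem stmt_10 (a z : ℝ) (hz : z ≠ 0) (c : ℕ → ℝ) (h0 : c 0 = -1)
    (hrec : ∀ d : ℕ, c (d + 1) =
      (1 / z) * c d - ∑ j ∈ Finset.range (d + 1),
        (a * (Nat.choose d j : ℝ) + if j = 0 then 0 else (Nat.choose d (j - 1) : ℝ)) * c j) :
    ∀ d : ℕ, c d =
      -(iteratedDeriv d (fun x : ℝ => Real.exp (1 / z - a * x - (1 / z) * Real.exp (-x))) 0) :=
  stmt_10_general a z c h0 hrec
end

section
/- For all integers d ≥ 1 and n ≥ 0, ∑_{k=0}^{n−1} (k^d − b(d))/k! = −(∑_{j=1}^{d} B_{d,j}·n^j)/n!. -/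
/-- The Bell numbers: `bell 0 = 1` and `bell (d+1) = ∑_{j=0}^{d} C(d,j) * bell j`. -/
def bell : ℕ → ℕ
  | 0 => 1
  | d + 1 => ∑ j ∈ (Finset.range (d + 1)).attach, Nat.choose d j.1 * bell j.1
  decreasing_by exact Finset.mem_range.mp j.2

/-- The doubly-indexed integers `B d j`: `B d j = 0` for `d < j`, `B j j = 1`, and
`B (d+1) j = ∑_{k=j}^{d} C(d,k) * B k j` for `d ≥ j`. -/
def Bmat : ℕ → ℕ → ℕ
  | 0, j => if 0 = j then 1 else 0
  | d + 1, j =>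
    if d + 1 < j then 0
    else if d + 1 = j then 1
    else ∑ k ∈ (Finset.Icc j d).attach, Nat.choose d k.1 * Bmat k.1 j
  decreasing_by
    have := (Finset.mem_Icc.mp k.2).2; omega

lemma bell_zero : bell 0 = 1 := by rw [bell]

lemma bell_succ (d : ℕ) :
    bell (d + 1) = ∑ j ∈ Finset.range (d + 1), Nat.choose d j * bell j := by
  rw [bell]
  exact Finset.sum_attach (Finset.range (d + 1)) (fun j => Nat.choose d j * bell j)

lemma Bmat_succ (d j : ℕ) (h1 : 1 ≤ j) (h2 : j ≤ d) :
    Bmat (d + 1) j = ∑ k ∈ Finset.Icc j d, Nat.choose d k * Bmat k j := by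
  rw [Bmat, if_neg (by omega), if_neg (by omega)]
  exact Finset.sum_attach (Finset.Icc j d) (fun k => Nat.choose d k * Bmat k j)

lemma Bmat_diag (d : ℕ) : Bmat d d = 1 := by
  cases d with
  | zero => simp [Bmat]
  | succ e => rw [Bmat, if_neg (by omega), if_pos rfl]

noncomputable def Q (d : ℕ) (x : ℝ) : ℝ := ∑ j ∈ Finset.Icc 1 d, (Bmat d j : ℝ) * x ^ j

lemma sum_Icc_one (m : ℕ) (f : ℕ → ℝ) :
    ∑ k ∈ Finset.range (m + 1), f k = f 0 + ∑ k ∈ Finset.Icc 1 m, f k := by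
  have h : Finset.range (m + 1) = insert 0 (Finset.Icc 1 m) := by
    ext k; simp [Finset.mem_Icc]; omega
  rw [h, Finset.sum_insert (by simp)]

lemma Q_rec (d : ℕ) (x : ℝ) :
    Q (d + 1) x = x ^ (d + 1) + ∑ k ∈ Finset.Icc 1 d, (Nat.choose d k : ℝ) * Q k x := by
  unfold Q
  rw [Finset.sum_Icc_succ_top (by omega), Bmat_diag]
  have h1 : ∀ j ∈ Finset.Icc 1 d, (Bmat (d + 1) j : ℝ) * x ^ j =
      ∑ k ∈ Finset.Icc j d, (Nat.choose d k : ℝ) * ((Bmat k j : ℝ) * x ^ j) := by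
    intro j hj
    rw [Finset.mem_Icc] at hj
    rw [Bmat_succ d j hj.1 hj.2]
    push_cast
    rw [Finset.sum_mul]
    exact Finset.sum_congr rfl fun k _ => by ring
  rw [Finset.sum_congr rfl h1]
  rw [Finset.sum_comm' (t' := Finset.Icc 1 d) (s' := fun k => Finset.Icc 1 k)
    (by intro j k; simp only [Finset.mem_Icc]; omega)]
  simp only [← Finset.mul_sum]
  push_cast
  ring

lemma key (d : ℕ) (hd : 1 ≤ d) (x : ℝ) :
    Q d (x + 1) = (x + 1) * (Q d x - x ^ d + (bell d : ℝ)) := by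
  induction d using Nat.strong_induction_on with
  | _ d ih =>
    match d, hd with
    | 1, _ =>
      have hB : Bmat 1 1 = 1 := Bmat_diag 1
      have hbell : bell 1 = 1 := by rw [bell_succ]; simp [bell_zero]
      simp [Q, hB, hbell]
    | (m + 2), _ =>
      set e := m + 1 with he
      show Q (e + 1) (x + 1) = (x + 1) * (Q (e + 1) x - x ^ (e + 1) + (bell (e + 1) : ℝ))
      have hrec := Q_rec e
      -- binomial sum
      have hbin : ∑ k ∈ Finset.Icc 1 e, (Nat.choose e k : ℝ) * x ^ k = (x + 1) ^ e - 1 := by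
        have h2 : (x + 1 : ℝ) ^ e = ∑ k ∈ Finset.range (e + 1), (Nat.choose e k : ℝ) * x ^ k := by
          rw [add_pow]
          exact Finset.sum_congr rfl fun k _ => by push_cast; ring
        rw [sum_Icc_one e (fun k => (Nat.choose e k : ℝ) * x ^ k)] at h2
        simp at h2
        linarith
      -- bell sum
      have hbell : ∑ k ∈ Finset.Icc 1 e, (Nat.choose e k : ℝ) * (bell k : ℝ) =
          (bell (e + 1) : ℝ) - 1 := by
        have hb : (bell (e + 1) : ℝ) =
            ∑ k ∈ Finset.range (e + 1), (Nat.choose e k : ℝ) * (bell k : ℝ) := by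
          rw [bell_succ]; push_cast; rfl
        rw [sum_Icc_one e (fun k => (Nat.choose e k : ℝ) * (bell k : ℝ))] at hb
        simp [bell_zero] at hb
        linarith
      -- apply IH to each term
      have hstep : ∑ k ∈ Finset.Icc 1 e, (Nat.choose e k : ℝ) * Q k (x + 1) =
          ∑ k ∈ Finset.Icc 1 e,
            (Nat.choose e k : ℝ) * ((x + 1) * (Q k x - x ^ k + (bell k : ℝ))) := by
        refine Finset.sum_congr rfl fun k hk => ?_
        rw [Finset.mem_Icc] at hk
        rw [ih k (by omega) hk.1]
      have hexp : ∑ k ∈ Finset.Icc 1 e,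
            (Nat.choose e k : ℝ) * ((x + 1) * (Q k x - x ^ k + (bell k : ℝ))) =
          (x + 1) * (∑ k ∈ Finset.Icc 1 e, (Nat.choose e k : ℝ) * Q k x)
            - (x + 1) * (∑ k ∈ Finset.Icc 1 e, (Nat.choose e k : ℝ) * x ^ k)
            + (x + 1) * (∑ k ∈ Finset.Icc 1 e, (Nat.choose e k : ℝ) * (bell k : ℝ)) := by
        rw [Finset.mul_sum, Finset.mul_sum, Finset.mul_sum, ← Finset.sum_sub_distrib,
          ← Finset.sum_add_distrib]
        exact Finset.sum_congr rfl fun k _ => by ring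
      have hsum : ∑ k ∈ Finset.Icc 1 e, (Nat.choose e k : ℝ) * Q k x =
          Q (e + 1) x - x ^ (e + 1) := by rw [hrec x]; ring
      rw [hrec (x + 1), hstep, hexp, hsum, hbin, hbell]
      ring

theorem stmt_14 (d : ℕ) (hd : 1 ≤ d) (n : ℕ) :
    ∑ k ∈ Finset.range n, (((k : ℝ) ^ d - (bell d : ℝ)) / (Nat.factorial k : ℝ)) =
      -((∑ j ∈ Finset.Icc 1 d, (Bmat d j : ℝ) * (n : ℝ) ^ j) / (Nat.factorial n : ℝ)) := by
  induction n with
  | zero =>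
    simp only [Finset.range_zero, Finset.sum_empty, Nat.cast_zero]
    rw [Finset.sum_eq_zero]
    · simp
    · intro j hj
      have h1 := (Finset.mem_Icc.mp hj).1
      rw [zero_pow (by omega)]
      ring
  | succ n ih =>
    rw [Finset.sum_range_succ, ih]
    have hk := key d hd (n : ℝ)
    have hQ : (∑ j ∈ Finset.Icc 1 d, (Bmat d j : ℝ) * ((n : ℝ) + 1) ^ j) =
        ((n : ℝ) + 1) * ((∑ j ∈ Finset.Icc 1 d, (Bmat d j : ℝ) * (n : ℝ) ^ j)
          - (n : ℝ) ^ d + (bell d : ℝ)) := hk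
    have hfac : (Nat.factorial (n + 1) : ℝ) = ((n : ℝ) + 1) * (Nat.factorial n : ℝ) := by
      rw [Nat.factorial_succ]; push_cast; ring
    have hfne : (Nat.factorial n : ℝ) ≠ 0 := by positivity
    have hne : ((n : ℝ) + 1) ≠ 0 := by positivity
    push_cast
    rw [hfac, hQ]
    field_simp
    ring
end
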